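/- arXiv:2411.11642 — 2 statements merged into one kernel-verified Lean document; each statement's English description precedes it below -/
import Mathlib

section
/- Let $\alpha \in (0,1)$, $0 < \beta$ with $2\beta < 1$ and $\theta := \frac{\alpha}{2} - \frac{\alpha d}{2q} \in (0,1)$. For fixed $t_2 > 0$, define $F(t_1) = \int_0^{t_1} \left| (t_2-s)^{\alpha-1} - (t_1-s)^{\alpha-1} \right| (t_2-s)^{-\frac{\alpha}{2}-\frac{\alpha d}{2q}} s^{-2\beta}\, ds$ for $0 < t_1 < t_2$. Then $F(t_1) \to 0$ as $t_1 \to t_2^-$. -/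
open MeasureTheory Set Filter Real NNReal

lemma aux_sub_rpow_le (a b l : ℝ) (ha : 0 ≤ a) (hab : a ≤ b) (h0 : 0 ≤ l) (h1 : l ≤ 1) :
    b ^ l - a ^ l ≤ (b - a) ^ l := by
  have h := NNReal.rpow_add_le_add_rpow (Real.toNNReal a) (Real.toNNReal (b - a)) h0 h1
  have hba : 0 ≤ b - a := sub_nonneg.2 hab
  have h' := (NNReal.coe_le_coe).2 h
  push_cast at h'
  rw [Real.coe_toNNReal _ ha, Real.coe_toNNReal _ hba] at h'
  have : a + (b - a) = b := by ring
  rw [this] at h'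
  linarith

lemma key_diff (α e a b : ℝ) (hα0 : 0 < α) (hα1 : α < 1) (he : 0 < e) (he' : e < 1 - α)
    (ha : 0 < a) (hab : a ≤ b) :
    a ^ (α - 1) - b ^ (α - 1) ≤ (b - a) ^ e * a ^ (α - 1 - e) := by
  have hb : 0 < b := lt_of_lt_of_le ha hab
  have hba : 0 ≤ b - a := sub_nonneg.2 hab
  have hl0 : 0 < 1 - α := by linarith
  have step1 : b ^ (1-α) - a ^ (1-α) ≤ (b - a) ^ (1-α) :=
    aux_sub_rpow_le a b _ ha.le hab hl0.le (by linarith)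
  have hA : (0:ℝ) < a ^ (1-α) := Real.rpow_pos_of_pos ha _
  have hB : (0:ℝ) < b ^ (1-α) := Real.rpow_pos_of_pos hb _
  have hna : a ^ (α-1) = (a ^ (1-α))⁻¹ := by
    rw [show α-1 = -(1-α) by ring, Real.rpow_neg ha.le]
  have hnb : b ^ (α-1) = (b ^ (1-α))⁻¹ := by
    rw [show α-1 = -(1-α) by ring, Real.rpow_neg hb.le]
  have h2 : a ^ (α-1) - b ^ (α-1) ≤ (b-a)^(1-α) * (a^(α-1) * b^(α-1)) := by
    rw [hna, hnb]
    have key : (a ^ (1-α))⁻¹ - (b ^ (1-α))⁻¹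
        = (b^(1-α) - a^(1-α)) * ((a ^ (1-α))⁻¹ * (b ^ (1-α))⁻¹) := by
      field_simp
    rw [key]
    exact mul_le_mul_of_nonneg_right step1 (by positivity)
  have hxle : b ^ (α-1) ≤ a ^ (α-1) := Real.rpow_le_rpow_of_nonpos ha hab (by linarith)
  have hx0 : (0:ℝ) ≤ a ^ (α-1) - b ^ (α-1) := sub_nonneg.2 hxle
  have h3 : a ^ (α-1) - b ^ (α-1) ≤ a ^ (α-1) := by
    have := Real.rpow_nonneg hb.le (α-1); linarith
  rcases hx0.eq_or_lt with hx | hx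
  · rw [← hx]; positivity
  set p := e / (1-α) with hpdef
  have hp0 : 0 < p := div_pos he hl0
  have hp1 : p < 1 := (div_lt_one hl0).2 he'
  have hep : (1-α) * p = e := by rw [hpdef, mul_div_cancel₀ _ hl0.ne']
  have hep' : (α-1) * p = -e := by
    have h' : (α-1) * p = -((1-α)*p) := by ring
    rw [h', hep]
  calc a ^ (α-1) - b ^ (α-1)
      = (a ^ (α-1) - b ^ (α-1)) ^ p * (a ^ (α-1) - b ^ (α-1)) ^ (1-p) := by
        rw [← Real.rpow_add hx, show p + (1-p) = 1 by ring, Real.rpow_one]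
    _ ≤ ((b-a)^(1-α) * (a^(α-1) * b^(α-1))) ^ p * (a^(α-1)) ^ (1-p) := by
        apply mul_le_mul (Real.rpow_le_rpow hx0 h2 hp0.le)
          (Real.rpow_le_rpow hx0 h3 (by linarith))
          (Real.rpow_nonneg hx0 _) (Real.rpow_nonneg (by positivity) _)
    _ = (b-a)^e * (b ^ ((α-1)*p) * a^(α-1)) := by
        rw [Real.mul_rpow (Real.rpow_nonneg hba _) (by positivity),
          Real.mul_rpow (Real.rpow_nonneg ha.le _) (Real.rpow_nonneg hb.le _),
          ← Real.rpow_mul hba, ← Real.rpow_mul ha.le, ← Real.rpow_mul hb.le,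
          ← Real.rpow_mul ha.le, hep]
        rw [show ((b-a)^e * (a ^ ((α-1)*p) * b ^ ((α-1)*p))) * a ^ ((α-1)*(1-p))
            = (b-a)^e * (b ^ ((α-1)*p) * (a ^ ((α-1)*p) * a ^ ((α-1)*(1-p)))) by ring,
          ← Real.rpow_add ha, show (α-1)*p + (α-1)*(1-p) = α-1 by ring]
    _ ≤ (b-a)^e * (a ^ ((α-1)*p) * a^(α-1)) := by
        apply mul_le_mul_of_nonneg_left _ (Real.rpow_nonneg hba _)
        exact mul_le_mul_of_nonneg_right
          (Real.rpow_le_rpow_of_nonpos ha hab (by rw [hep']; linarith))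
          (Real.rpow_nonneg ha.le _)
    _ = (b-a)^e * a ^ (α-1-e) := by
        rw [← Real.rpow_add ha, hep']
        ring_nf

/-- Dominated-convergence limit for the time-continuity estimate: with
`θ = α/2 - αd/(2q) ∈ (0,1)`, `0 < 2β < 1`, the quantity
`F(t₁) = ∫_0^{t₁} |(t₂-s)^{α-1} - (t₁-s)^{α-1}| (t₂-s)^{-α/2-αd/(2q)} s^{-2β} ds`
tends to `0` as `t₁ → t₂⁻`. -/
theorem continuity_integral_vanishes (α β d q t₂ : ℝ)
    (hα : α ∈ Set.Ioo (0:ℝ) 1) (hβ : 0 < β) (hβ' : 2 * β < 1)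
    (hθ : α / 2 - α * d / (2 * q) ∈ Set.Ioo (0:ℝ) 1) (ht₂ : 0 < t₂) :
    Tendsto (fun t₁ =>
        ∫ s in (0:ℝ)..t₁,
          |(t₂ - s) ^ (α - 1) - (t₁ - s) ^ (α - 1)|
            * (t₂ - s) ^ (-(α / 2) - α * d / (2 * q)) * s ^ (-(2 * β)))
      (nhdsWithin t₂ (Set.Iio t₂)) (nhds 0) := by
  obtain ⟨hα0, hα1⟩ := hα
  obtain ⟨hθ0, hθ1⟩ := hθ
  set γ : ℝ := α/2 + α*d/(2*q) with hγ
  have hexp : -(α / 2) - α * d / (2 * q) = -γ := by rw [hγ]; ring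
  set e : ℝ := min ((α/2 - α*d/(2*q))/2) (min ((1-α)/2) (α/2)) with he_def
  have he0 : 0 < e := lt_min (by linarith) (lt_min (by linarith) (by linarith))
  have heθ : e < α/2 - α*d/(2*q) := lt_of_le_of_lt (min_le_left _ _) (by linarith)
  have heα : e < 1 - α :=
    lt_of_le_of_lt (le_trans (min_le_right _ _) (min_le_left _ _)) (by linarith)
  have heA : e < α :=
    lt_of_le_of_lt (le_trans (min_le_right _ _) (min_le_right _ _)) (by linarith)
  -- choose C and ρ
  obtain ⟨C, ρ, hC, hρ1, hρ0, hpt⟩ : ∃ C ρ : ℝ, 0 < C ∧ -1 < ρ ∧ ρ < 0 ∧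
      ∀ t₁ s : ℝ, 0 < s → s < t₁ → t₁ < t₂ →
        (t₁ - s) ^ (α - 1 - e) * (t₂ - s) ^ (-γ) ≤ C * (t₁ - s) ^ ρ := by
    rcases le_or_gt 0 γ with hγ0 | hγ0
    · refine ⟨1, α - 1 - e - γ, one_pos, by rw [hγ] at hγ0 ⊢; linarith,
        by rw [hγ] at hγ0 ⊢; linarith, ?_⟩
      intro t₁ s hs hst h1
      have h₁ : 0 < t₁ - s := by linarith
      have h₂ : t₁ - s ≤ t₂ - s := by linarith
      rw [one_mul, show α-1-e-γ = (α-1-e) + (-γ) by ring, Real.rpow_add h₁]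
      exact mul_le_mul_of_nonneg_left
        (Real.rpow_le_rpow_of_nonpos h₁ h₂ (by linarith)) (Real.rpow_nonneg h₁.le _)
    · refine ⟨t₂ ^ (-γ), α - 1 - e, Real.rpow_pos_of_pos ht₂ _, by linarith [heA], by linarith, ?_⟩
      intro t₁ s hs hst h1
      have h₂0 : 0 < t₂ - s := by linarith
      rw [mul_comm]
      exact mul_le_mul_of_nonneg_right
        (Real.rpow_le_rpow h₂0.le (by linarith) (by linarith)) (Real.rpow_nonneg (by linarith) _)
  -- pointwise bound on the integrand
  have hfle : ∀ t₁ s : ℝ, 0 < s → s < t₁ → t₁ < t₂ →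
      |(t₂ - s) ^ (α - 1) - (t₁ - s) ^ (α - 1)|
        * (t₂ - s) ^ (-(α / 2) - α * d / (2 * q)) * s ^ (-(2 * β))
      ≤ (t₂ - t₁) ^ e * C * (t₁ - s) ^ ρ * s ^ (-(2 * β)) := by
    intro t₁ s hs hst h1
    have h₁ : 0 < t₁ - s := by linarith
    have h₂ : t₁ - s ≤ t₂ - s := by linarith
    have h₂0 : 0 < t₂ - s := by linarith
    have habs : |(t₂ - s) ^ (α - 1) - (t₁ - s) ^ (α - 1)|
        = (t₁ - s) ^ (α - 1) - (t₂ - s) ^ (α - 1) := by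
      rw [abs_sub_comm, abs_of_nonneg (sub_nonneg.2 (Real.rpow_le_rpow_of_nonpos h₁ h₂ (by linarith)))]
    rw [habs, hexp]
    have hkey := key_diff α e (t₁ - s) (t₂ - s) hα0 hα1 he0 heα h₁ h₂
    rw [show t₂ - s - (t₁ - s) = t₂ - t₁ by ring] at hkey
    calc ((t₁-s)^(α-1) - (t₂-s)^(α-1)) * (t₂-s)^(-γ) * s^(-(2*β))
        ≤ ((t₂-t₁)^e * (t₁-s)^(α-1-e)) * (t₂-s)^(-γ) * s^(-(2*β)) := by
          exact mul_le_mul_of_nonneg_right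
            (mul_le_mul_of_nonneg_right hkey (Real.rpow_nonneg h₂0.le _))
            (Real.rpow_nonneg hs.le _)
      _ = (t₂-t₁)^e * ((t₁-s)^(α-1-e) * (t₂-s)^(-γ)) * s^(-(2*β)) := by ring
      _ ≤ (t₂-t₁)^e * (C * (t₁-s)^ρ) * s^(-(2*β)) := by
          exact mul_le_mul_of_nonneg_right
            (mul_le_mul_of_nonneg_left (hpt t₁ s hs hst h1) (Real.rpow_nonneg (by linarith) _))
            (Real.rpow_nonneg hs.le _)
      _ = (t₂-t₁)^e * C * (t₁-s)^ρ * s^(-(2*β)) := by ring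
  set K : ℝ := max ((t₂/4) ^ (ρ+1-2*β)) ((t₂/2) ^ (ρ+1-2*β)) with hK
  have hK0 : 0 < K := lt_max_of_lt_left (Real.rpow_pos_of_pos (by linarith) _)
  set C₀ : ℝ := C * K * (1/(1-2*β) + 1/(ρ+1)) with hC₀
  have hsum0 : 0 < 1/(1-2*β) + 1/(ρ+1) :=
    add_pos (one_div_pos.2 (by linarith)) (one_div_pos.2 (by linarith))
  have hC₀0 : 0 < C₀ := mul_pos (mul_pos hC hK0) hsum0
  -- main bound
  have hmain : ∀ t₁ ∈ Ioo (t₂/2) t₂,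
      (∫ s in (0:ℝ)..t₁,
          |(t₂ - s) ^ (α - 1) - (t₁ - s) ^ (α - 1)|
            * (t₂ - s) ^ (-(α / 2) - α * d / (2 * q)) * s ^ (-(2 * β)))
        ≤ C₀ * (t₂ - t₁) ^ e := by
    intro t₁ ht₁
    obtain ⟨ht₁l, ht₁r⟩ := ht₁
    have ht₁0 : 0 < t₁ := by linarith
    set m : ℝ := t₁/2 with hm
    have hm0 : 0 < m := by positivity
    have hmt : m < t₁ := by linarith
    set f : ℝ → ℝ := fun s =>
      |(t₂ - s) ^ (α - 1) - (t₁ - s) ^ (α - 1)|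
        * (t₂ - s) ^ (-(α / 2) - α * d / (2 * q)) * s ^ (-(2 * β)) with hf
    have hfm : Measurable f := by fun_prop
    have hδ0 : 0 < t₂ - t₁ := by linarith
    have hcoef0 : (0:ℝ) ≤ (t₂ - t₁) ^ e * C :=
      mul_nonneg (Real.rpow_nonneg hδ0.le _) hC.le
    -- integrability + bound on (0, m]
    have hg₁int : IntegrableOn (fun s : ℝ => (t₂-t₁)^e * C * m^ρ * s ^ (-(2*β))) (Ioc 0 m) := by
      have h' := intervalIntegral.intervalIntegrable_rpow' (a := (0:ℝ)) (b := m)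
        (show (-1:ℝ) < -(2*β) by linarith)
      rw [intervalIntegrable_iff_integrableOn_Ioc_of_le hm0.le] at h'
      exact h'.const_mul _
    have hb₁ : ∀ s ∈ Ioc (0:ℝ) m, f s ≤ (t₂-t₁)^e * C * m^ρ * s ^ (-(2*β)) := by
      intro s hs
      obtain ⟨hs0, hsm⟩ := hs
      refine le_trans (hfle t₁ s hs0 (by linarith) ht₁r) ?_
      have : (t₁ - s) ^ ρ ≤ m ^ ρ :=
        Real.rpow_le_rpow_of_nonpos hm0 (by linarith) hρ0.le
      exact mul_le_mul_of_nonneg_right (mul_le_mul_of_nonneg_left this hcoef0)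
        (Real.rpow_nonneg hs0.le _)
    have hf1nn : ∀ s ∈ Ioc (0:ℝ) m, 0 ≤ f s := by
      intro s hs
      exact mul_nonneg (mul_nonneg (abs_nonneg _) (Real.rpow_nonneg (by linarith [hs.2]) _))
        (Real.rpow_nonneg hs.1.le _)
    have hint1 : IntegrableOn f (Ioc 0 m) := by
      apply Integrable.mono' hg₁int (hfm.aestronglyMeasurable.restrict)
      rw [ae_restrict_iff' measurableSet_Ioc]
      refine ae_of_all _ fun s hs => ?_
      rw [Real.norm_eq_abs, abs_of_nonneg (hf1nn s hs)]
      exact hb₁ s hs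
    -- integrability + bound on (m, t₁)
    have hg₂int : IntegrableOn (fun s : ℝ => (t₂-t₁)^e * C * m^(-(2*β)) * (t₁ - s) ^ ρ) (Ioo m t₁) := by
      have h' := intervalIntegral.intervalIntegrable_rpow' (a := (0:ℝ)) (b := t₁ - m) hρ1
      have h'' := (h'.comp_sub_left t₁).symm
      simp only [sub_sub_cancel, sub_zero] at h''
      rw [intervalIntegrable_iff_integrableOn_Ioc_of_le hmt.le] at h''
      exact ((h''.mono_set Ioo_subset_Ioc_self).const_mul _)
    have hb₂ : ∀ s ∈ Ioo m t₁, f s ≤ (t₂-t₁)^e * C * m^(-(2*β)) * (t₁ - s) ^ ρ := by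
      intro s hs
      obtain ⟨hsm, hst⟩ := hs
      have hs0 : 0 < s := lt_trans hm0 hsm
      refine le_trans (hfle t₁ s hs0 hst ht₁r) ?_
      have h' : s ^ (-(2*β)) ≤ m ^ (-(2*β)) :=
        Real.rpow_le_rpow_of_nonpos hm0 hsm.le (by linarith)
      calc (t₂-t₁)^e * C * (t₁-s)^ρ * s^(-(2*β))
          ≤ (t₂-t₁)^e * C * (t₁-s)^ρ * m^(-(2*β)) :=
            mul_le_mul_of_nonneg_left h'
              (mul_nonneg hcoef0 (Real.rpow_nonneg (by linarith) _))
        _ = (t₂-t₁)^e * C * m^(-(2*β)) * (t₁-s)^ρ := by ring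
    have hf2nn : ∀ s ∈ Ioo m t₁, 0 ≤ f s := by
      intro s hs
      exact mul_nonneg (mul_nonneg (abs_nonneg _) (Real.rpow_nonneg (by linarith [hs.2]) _))
        (Real.rpow_nonneg (le_of_lt (lt_trans hm0 hs.1)) _)
    have hint2 : IntegrableOn f (Ioo m t₁) := by
      apply Integrable.mono' hg₂int (hfm.aestronglyMeasurable.restrict)
      rw [ae_restrict_iff' measurableSet_Ioo]
      refine ae_of_all _ fun s hs => ?_
      rw [Real.norm_eq_abs, abs_of_nonneg (hf2nn s hs)]
      exact hb₂ s hs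
    -- split the integral
    have hdisj : Disjoint (Ioc (0:ℝ) m) (Ioo m t₁) := by
      rw [Set.disjoint_left]
      rintro x ⟨_, h2⟩ ⟨h3, _⟩
      exact absurd h3 (not_lt.2 h2)
    have hsplit : (∫ s in (0:ℝ)..t₁, f s)
        = (∫ s in Ioc (0:ℝ) m, f s) + ∫ s in Ioo m t₁, f s := by
      rw [intervalIntegral.integral_of_le ht₁0.le, integral_Ioc_eq_integral_Ioo,
        ← Set.Ioc_union_Ioo_eq_Ioo hm0.le hmt,
        MeasureTheory.setIntegral_union hdisj measurableSet_Ioo hint1 hint2]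
    -- compute the two bounding integrals
    have hI1 : (∫ s in Ioc (0:ℝ) m, (t₂-t₁)^e * C * m^ρ * s ^ (-(2*β)))
        = (t₂-t₁)^e * C * m^ρ * (m ^ (-(2*β)+1) / (-(2*β)+1)) := by
      rw [MeasureTheory.integral_const_mul, ← intervalIntegral.integral_of_le hm0.le,
        integral_rpow (Or.inl (by linarith)),
        Real.zero_rpow (by linarith : -(2*β)+1 ≠ 0), sub_zero]
    have hI2 : (∫ s in Ioo m t₁, (t₂-t₁)^e * C * m^(-(2*β)) * (t₁ - s) ^ ρ)
        = (t₂-t₁)^e * C * m^(-(2*β)) * (m ^ (ρ+1) / (ρ+1)) := by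
      rw [MeasureTheory.integral_const_mul, ← integral_Ioc_eq_integral_Ioo,
        ← intervalIntegral.integral_of_le hmt.le,
        intervalIntegral.integral_comp_sub_left (fun x => x ^ ρ) t₁, sub_self,
        show t₁ - m = m by rw [hm]; ring,
        integral_rpow (Or.inl hρ1),
        Real.zero_rpow (by linarith : ρ+1 ≠ 0), sub_zero]
    have hest1 : (∫ s in Ioc (0:ℝ) m, f s)
        ≤ (t₂-t₁)^e * C * m^ρ * (m ^ (-(2*β)+1) / (-(2*β)+1)) := by
      rw [← hI1]
      exact setIntegral_mono_on hint1 hg₁int measurableSet_Ioc hb₁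
    have hest2 : (∫ s in Ioo m t₁, f s)
        ≤ (t₂-t₁)^e * C * m^(-(2*β)) * (m ^ (ρ+1) / (ρ+1)) := by
      rw [← hI2]
      exact setIntegral_mono_on hint2 hg₂int measurableSet_Ioo hb₂
    -- combine
    have hmK : m ^ (ρ+1-2*β) ≤ K := by
      rcases le_or_gt 0 (ρ+1-2*β) with h | h
      · exact le_trans (Real.rpow_le_rpow hm0.le (by linarith) h) (le_max_right _ _)
      · exact le_trans (Real.rpow_le_rpow_of_nonpos (by linarith : (0:ℝ) < t₂/4)
          (by linarith) h.le) (le_max_left _ _)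
    have hmm1 : m^ρ * m ^ (-(2*β)+1) = m ^ (ρ+1-2*β) := by
      rw [← Real.rpow_add hm0]; ring_nf
    have hmm2 : m^(-(2*β)) * m ^ (ρ+1) = m ^ (ρ+1-2*β) := by
      rw [← Real.rpow_add hm0]; ring_nf
    have htotal : (∫ s in (0:ℝ)..t₁, f s)
        ≤ (t₂-t₁)^e * C * (m ^ (ρ+1-2*β) * (1/(1-2*β) + 1/(ρ+1))) := by
      rw [hsplit]
      have h1 : (t₂-t₁)^e * C * m^ρ * (m ^ (-(2*β)+1) / (-(2*β)+1))
          = (t₂-t₁)^e * C * (m ^ (ρ+1-2*β) * (1/(1-2*β))) := by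
        rw [← hmm1]
        field_simp
        ring_nf
      have h2 : (t₂-t₁)^e * C * m^(-(2*β)) * (m ^ (ρ+1) / (ρ+1))
          = (t₂-t₁)^e * C * (m ^ (ρ+1-2*β) * (1/(ρ+1))) := by
        rw [← hmm2]
        field_simp
      calc (∫ s in Ioc (0:ℝ) m, f s) + ∫ s in Ioo m t₁, f s
          ≤ (t₂-t₁)^e * C * m^ρ * (m ^ (-(2*β)+1) / (-(2*β)+1))
            + (t₂-t₁)^e * C * m^(-(2*β)) * (m ^ (ρ+1) / (ρ+1)) := add_le_add hest1 hest2
        _ = (t₂-t₁)^e * C * (m ^ (ρ+1-2*β) * (1/(1-2*β) + 1/(ρ+1))) := by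
            rw [h1, h2]; ring
    refine le_trans htotal ?_
    rw [hC₀, (show C * K * (1/(1-2*β) + 1/(ρ+1)) * (t₂ - t₁)^e
        = (t₂-t₁)^e * C * (K * (1/(1-2*β) + 1/(ρ+1))) by ring)]
    exact mul_le_mul_of_nonneg_left
      (mul_le_mul_of_nonneg_right hmK hsum0.le) hcoef0
  -- conclude by squeezing
  have hmem : Ioo (t₂/2) t₂ ∈ nhdsWithin t₂ (Set.Iio t₂) :=
    Ioo_mem_nhdsLT_of_mem ⟨by linarith, le_refl _⟩
  apply tendsto_of_tendsto_of_tendsto_of_le_of_le' (g := fun _ => (0:ℝ))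
    (h := fun t₁ => C₀ * (t₂ - t₁) ^ e) tendsto_const_nhds
  · have h1 : Tendsto (fun t₁ : ℝ => t₂ - t₁) (nhdsWithin t₂ (Set.Iio t₂)) (nhds 0) := by
      have h' : Tendsto (fun t₁ : ℝ => t₂ - t₁) (nhds t₂) (nhds (t₂ - t₂)) :=
        (continuous_const.sub continuous_id).tendsto t₂
      rw [sub_self] at h'
      exact h'.mono_left nhdsWithin_le_nhds
    have h2 : Tendsto (fun x : ℝ => x ^ e) (nhds 0) (nhds 0) := by
      have h' := (Real.continuousAt_rpow_const 0 e (Or.inr he0.le)).tendsto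
      rwa [Real.zero_rpow he0.ne'] at h'
    have := (h2.comp h1).const_mul C₀
    simpa using this
  · filter_upwards [hmem] with t₁ ht₁
    apply intervalIntegral.integral_nonneg (by linarith [ht₁.1] : (0:ℝ) ≤ t₁)
    intro s hs
    exact mul_nonneg (mul_nonneg (abs_nonneg _)
      (Real.rpow_nonneg (by linarith [hs.2, ht₁.2] : (0:ℝ) ≤ t₂ - s) _))
      (Real.rpow_nonneg hs.1 _)
  · filter_upwards [hmem] with t₁ ht₁
    exact hmain t₁ ht₁
end

section
/- Let $v : \mathbb{R} \to (0,\infty)$ and $n : \mathbb{R} \to \mathbb{R}$ be smooth functions, fix $x$ and $t$, and define for $h > 0$ the discrete chemotactic operator $L_h := -n(x) + \frac{v(x)}{v(x)+v(x-2h)} n(x-h) + \frac{v(x)}{v(x)+v(x+2h)} n(x+h)$. Then $\lim_{h \to 0} \frac{L_h}{h^2} = \frac{1}{2} n''(x) - \left( \frac{n(x) v'(x)}{v(x)} \right)'$. -/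
open Filter Set

private noncomputable def chemF (v n : ℝ → ℝ) (x h : ℝ) : ℝ :=
  -n x + v x / (v x + v (x - 2 * h)) * n (x - h)
      + v x / (v x + v (x + 2 * h)) * n (x + h)

private noncomputable def chemF1 (v n : ℝ → ℝ) (x h : ℝ) : ℝ :=
  2 * v x * deriv v (x - 2 * h) / (v x + v (x - 2 * h)) ^ 2 * n (x - h)
    - v x / (v x + v (x - 2 * h)) * deriv n (x - h)
    - 2 * v x * deriv v (x + 2 * h) / (v x + v (x + 2 * h)) ^ 2 * n (x + h)
    + v x / (v x + v (x + 2 * h)) * deriv n (x + h)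

section aux

variable (v n : ℝ → ℝ) (x : ℝ)

private lemma inner_sub (h : ℝ) : HasDerivAt (fun h : ℝ => x - 2 * h) (-2) h := by
  simpa using ((hasDerivAt_id' h).const_mul 2).const_sub x

private lemma inner_add (h : ℝ) : HasDerivAt (fun h : ℝ => x + 2 * h) (2) h := by
  simpa using ((hasDerivAt_id' h).const_mul 2).const_add x

private lemma inner_sub1 (h : ℝ) : HasDerivAt (fun h : ℝ => x - h) (-1) h := by
  simpa using (hasDerivAt_id' h).const_sub x

private lemma inner_add1 (h : ℝ) : HasDerivAt (fun h : ℝ => x + h) (1) h := by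
  simpa using (hasDerivAt_id' h).const_add x

private lemma comp_sub {g : ℝ → ℝ} (hg : ∀ y, HasDerivAt g (deriv g y) y) (h : ℝ) :
    HasDerivAt (fun h : ℝ => g (x - 2 * h)) (deriv g (x - 2 * h) * (-2)) h := by
  simpa [Function.comp_def] using (hg (x - 2 * h)).comp h (inner_sub x h)

private lemma comp_add {g : ℝ → ℝ} (hg : ∀ y, HasDerivAt g (deriv g y) y) (h : ℝ) :
    HasDerivAt (fun h : ℝ => g (x + 2 * h)) (deriv g (x + 2 * h) * 2) h := by
  simpa [Function.comp_def] using (hg (x + 2 * h)).comp h (inner_add x h)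

private lemma comp_sub1 {g : ℝ → ℝ} (hg : ∀ y, HasDerivAt g (deriv g y) y) (h : ℝ) :
    HasDerivAt (fun h : ℝ => g (x - h)) (deriv g (x - h) * (-1)) h := by
  simpa [Function.comp_def] using (hg (x - h)).comp h (inner_sub1 x h)

private lemma comp_add1 {g : ℝ → ℝ} (hg : ∀ y, HasDerivAt g (deriv g y) y) (h : ℝ) :
    HasDerivAt (fun h : ℝ => g (x + h)) (deriv g (x + h) * 1) h := by
  simpa [Function.comp_def] using (hg (x + h)).comp h (inner_add1 x h)

end aux

private lemma chemF_hasDeriv (v n : ℝ → ℝ)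
    (hv : ContDiff ℝ (⊤ : ℕ∞) v) (hn : ContDiff ℝ (⊤ : ℕ∞) n) (hvpos : ∀ y, 0 < v y) (x : ℝ) (h : ℝ) :
    HasDerivAt (chemF v n x) (chemF1 v n x h) h := by
  have hvd : ∀ y, HasDerivAt v (deriv v y) y := fun y =>
    ((hv.of_le (by simp) : ContDiff ℝ (⊤ : ℕ∞) v).differentiable (by simp) y).hasDerivAt
  have hnd : ∀ y, HasDerivAt n (deriv n y) y := fun y =>
    ((hn.of_le (by simp) : ContDiff ℝ (⊤ : ℕ∞) n).differentiable (by simp) y).hasDerivAt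
  have hden1 : v x + v (x - 2 * h) ≠ 0 := by
    have := hvpos x; have := hvpos (x - 2 * h); positivity
  have hden2 : v x + v (x + 2 * h) ≠ 0 := by
    have := hvpos x; have := hvpos (x + 2 * h); positivity
  have h1 : HasDerivAt (fun h : ℝ => v x / (v x + v (x - 2 * h)))
      ((0 * (v x + v (x - 2 * h)) - v x * (0 + deriv v (x - 2 * h) * (-2)))
        / (v x + v (x - 2 * h)) ^ 2) h :=
    (hasDerivAt_const h (v x)).div ((hasDerivAt_const h (v x)).add (comp_sub x hvd h)) hden1
  have h2 : HasDerivAt (fun h : ℝ => v x / (v x + v (x + 2 * h)))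
      ((0 * (v x + v (x + 2 * h)) - v x * (0 + deriv v (x + 2 * h) * 2))
        / (v x + v (x + 2 * h)) ^ 2) h :=
    (hasDerivAt_const h (v x)).div ((hasDerivAt_const h (v x)).add (comp_add x hvd h)) hden2
  have H := (((hasDerivAt_const h (-n x)).add (h1.mul (comp_sub1 x hnd h))).add
      (h2.mul (comp_add1 x hnd h)))
  have : HasDerivAt (chemF v n x) _ h := H
  convert this using 1
  simp only [chemF1]
  field_simp
  ring

private lemma chemF1_zero (v n : ℝ → ℝ) (hvpos : ∀ y, 0 < v y) (x : ℝ) :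
    chemF1 v n x 0 = 0 := by
  have hV : v x ≠ 0 := (hvpos x).ne'
  simp only [chemF1, mul_zero, sub_zero, add_zero]
  field_simp
  ring

private lemma chemF_zero (v n : ℝ → ℝ) (hvpos : ∀ y, 0 < v y) (x : ℝ) :
    chemF v n x 0 = 0 := by
  have hV : v x ≠ 0 := (hvpos x).ne'
  have h2 : v x / (v x + v x) = 1 / 2 := by
    rw [show v x + v x = 2 * v x from by ring]
    field_simp
  simp only [chemF, mul_zero, sub_zero, add_zero, h2]
  ring

private lemma chemF1_hasDeriv (v n : ℝ → ℝ)
    (hv : ContDiff ℝ (⊤ : ℕ∞) v) (hn : ContDiff ℝ (⊤ : ℕ∞) n) (hvpos : ∀ y, 0 < v y) (x : ℝ) :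
    HasDerivAt (chemF1 v n x)
      (deriv (deriv n) x
        - 2 * ((deriv n x * deriv v x + n x * deriv (deriv v) x) * v x
            - n x * deriv v x * deriv v x) / (v x) ^ 2) 0 := by
  have hvi : ContDiff ℝ (⊤ : ℕ∞) v := hv.of_le (by simp)
  have hni : ContDiff ℝ (⊤ : ℕ∞) n := hn.of_le (by simp)
  have hv' : ContDiff ℝ (⊤ : ℕ∞) (deriv v) := (contDiff_infty_iff_deriv.mp hvi).2
  have hn' : ContDiff ℝ (⊤ : ℕ∞) (deriv n) := (contDiff_infty_iff_deriv.mp hni).2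
  have hvd : ∀ y, HasDerivAt v (deriv v y) y := fun y =>
    (hvi.differentiable (by simp) y).hasDerivAt
  have hnd : ∀ y, HasDerivAt n (deriv n y) y := fun y =>
    (hni.differentiable (by simp) y).hasDerivAt
  have hvd' : ∀ y, HasDerivAt (deriv v) (deriv (deriv v) y) y := fun y =>
    (hv'.differentiable (by simp) y).hasDerivAt
  have hnd' : ∀ y, HasDerivAt (deriv n) (deriv (deriv n) y) y := fun y =>
    (hn'.differentiable (by simp) y).hasDerivAt
  have hden1 : v x + v (x - 2 * (0:ℝ)) ≠ 0 := by
    have := hvpos x; have := hvpos (x - 2 * (0:ℝ)); positivity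
  have hden2 : v x + v (x + 2 * (0:ℝ)) ≠ 0 := by
    have := hvpos x; have := hvpos (x + 2 * (0:ℝ)); positivity
  -- derivative of numerator pieces at 0
  have hnum1 : HasDerivAt (fun h : ℝ => 2 * v x * deriv v (x - 2 * h))
      (deriv (deriv v) (x - 2 * (0:ℝ)) * (-2) * (2 * v x)) 0 := by
    simpa [mul_comm, mul_assoc, mul_left_comm] using (comp_sub x hvd' 0).const_mul (2 * v x)
  have hnum2 : HasDerivAt (fun h : ℝ => 2 * v x * deriv v (x + 2 * h))
      (deriv (deriv v) (x + 2 * (0:ℝ)) * 2 * (2 * v x)) 0 := by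
    simpa [mul_comm, mul_assoc, mul_left_comm] using (comp_add x hvd' 0).const_mul (2 * v x)
  have hdenf1 : HasDerivAt (fun h : ℝ => (v x + v (x - 2 * h)) ^ 2)
      (2 * (v x + v (x - 2 * (0:ℝ))) ^ 1 * (0 + deriv v (x - 2 * (0:ℝ)) * (-2))) 0 := by
    exact HasDerivAt.fun_pow ((hasDerivAt_const (0:ℝ) (v x)).add (comp_sub x hvd 0)) 2 |>.congr_deriv
      (by norm_num)
  have hdenf2 : HasDerivAt (fun h : ℝ => (v x + v (x + 2 * h)) ^ 2)
      (2 * (v x + v (x + 2 * (0:ℝ))) ^ 1 * (0 + deriv v (x + 2 * (0:ℝ)) * 2)) 0 := by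
    exact HasDerivAt.fun_pow ((hasDerivAt_const (0:ℝ) (v x)).add (comp_add x hvd 0)) 2 |>.congr_deriv
      (by norm_num)
  have hden1sq : (v x + v (x - 2 * (0:ℝ))) ^ 2 ≠ 0 := pow_ne_zero _ hden1
  have hden2sq : (v x + v (x + 2 * (0:ℝ))) ^ 2 ≠ 0 := pow_ne_zero _ hden2
  have hq1 : HasDerivAt (fun h : ℝ => v x / (v x + v (x - 2 * h)))
      ((0 * (v x + v (x - 2 * (0:ℝ))) - v x * (0 + deriv v (x - 2 * (0:ℝ)) * (-2)))
        / (v x + v (x - 2 * (0:ℝ))) ^ 2) 0 :=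
    (hasDerivAt_const 0 (v x)).div ((hasDerivAt_const 0 (v x)).add (comp_sub x hvd 0)) hden1
  have hq2 : HasDerivAt (fun h : ℝ => v x / (v x + v (x + 2 * h)))
      ((0 * (v x + v (x + 2 * (0:ℝ))) - v x * (0 + deriv v (x + 2 * (0:ℝ)) * 2))
        / (v x + v (x + 2 * (0:ℝ))) ^ 2) 0 :=
    (hasDerivAt_const 0 (v x)).div ((hasDerivAt_const 0 (v x)).add (comp_add x hvd 0)) hden2
  have H :=
    ((((hnum1.div hdenf1 hden1sq).mul (comp_sub1 x hnd 0)).sub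
        (hq1.mul (comp_sub1 x hnd' 0))).sub
      ((hnum2.div hdenf2 hden2sq).mul (comp_add1 x hnd 0))).add
      (hq2.mul (comp_add1 x hnd' 0))
  have H' : HasDerivAt (chemF1 v n x) _ 0 := H
  convert H' using 1
  have hV : v x ≠ 0 := (hvpos x).ne'
  simp only [mul_zero, sub_zero, add_zero, pow_one, zero_mul, zero_add, zero_sub, mul_one, Pi.div_apply]
  field_simp
  ring_nf

/-- Continuum limit of the discrete chemotactic operator:
`L_h = -n(x) + (v(x)/(v(x)+v(x-2h))) n(x-h) + (v(x)/(v(x)+v(x+2h))) n(x+h)`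
satisfies `L_h / h² → (1/2) n''(x) - (n v'/v)'(x)` as `h → 0⁺`. -/
theorem discrete_chemotaxis_limit (v n : ℝ → ℝ)
    (hv : ContDiff ℝ (⊤ : ℕ∞) v) (hn : ContDiff ℝ (⊤ : ℕ∞) n) (hvpos : ∀ y, 0 < v y) (x : ℝ) :
    Tendsto (fun h : ℝ =>
        (-n x + v x / (v x + v (x - 2 * h)) * n (x - h)
          + v x / (v x + v (x + 2 * h)) * n (x + h)) / h ^ 2)
      (nhdsWithin 0 (Set.Ioi 0))
      (nhds ((1 / 2) * deriv (deriv n) x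
        - deriv (fun y => n y * deriv v y / v y) x)) := by
  have hvi : ContDiff ℝ (⊤ : ℕ∞) v := hv.of_le (by simp)
  have hni : ContDiff ℝ (⊤ : ℕ∞) n := hn.of_le (by simp)
  have hv' : ContDiff ℝ (⊤ : ℕ∞) (deriv v) := (contDiff_infty_iff_deriv.mp hvi).2
  have hvd : ∀ y, HasDerivAt v (deriv v y) y := fun y =>
    (hvi.differentiable (by simp) y).hasDerivAt
  have hnd : ∀ y, HasDerivAt n (deriv n y) y := fun y =>
    (hni.differentiable (by simp) y).hasDerivAt
  have hvd' : ∀ y, HasDerivAt (deriv v) (deriv (deriv v) y) y := fun y =>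
    ((hv'.differentiable (by simp)) y).hasDerivAt
  have hV : v x ≠ 0 := (hvpos x).ne'
  -- compute the deriv in the goal
  have hW : deriv (fun y => n y * deriv v y / v y) x
      = ((deriv n x * deriv v x + n x * deriv (deriv v) x) * v x
          - n x * deriv v x * deriv v x) / (v x) ^ 2 := by
    exact (((hnd x).mul (hvd' x)).div (hvd x) hV).deriv
  set S : ℝ := deriv (deriv n) x
      - 2 * ((deriv n x * deriv v x + n x * deriv (deriv v) x) * v x
          - n x * deriv v x * deriv v x) / (v x) ^ 2 with hSdef
  have key : Tendsto (fun h : ℝ => chemF v n x h / h ^ 2)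
      (nhdsWithin 0 (Set.Ioi 0)) (nhds (S / 2)) := by
    apply HasDerivAt.lhopital_zero_nhdsGT
      (f' := chemF1 v n x) (g' := fun h : ℝ => 2 * h)
    · exact Eventually.of_forall fun h => chemF_hasDeriv v n hv hn hvpos x h
    · exact Eventually.of_forall fun h => by
        simpa [mul_comm] using hasDerivAt_pow 2 h
    · filter_upwards [self_mem_nhdsWithin] with h hh
      have : (0:ℝ) < h := hh
      positivity
    · have hc : ContinuousAt (chemF v n x) 0 := (chemF_hasDeriv v n hv hn hvpos x 0).continuousAt
      have := hc.continuousWithinAt (s := Set.Ioi 0)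
      simpa [chemF_zero v n hvpos x] using this.tendsto
    · have : ContinuousAt (fun h : ℝ => h ^ 2) 0 := by fun_prop
      simpa using (this.continuousWithinAt (s := Set.Ioi 0)).tendsto
    · -- limit of chemF1 h / (2h)
      have hslope : Tendsto (slope (chemF1 v n x) 0) (nhdsWithin 0 (Set.Ioi 0)) (nhds S) :=
        (hasDerivAt_iff_tendsto_slope.mp (chemF1_hasDeriv v n hv hn hvpos x)).mono_left
          (nhdsWithin_mono 0 (fun y hy => ne_of_gt hy))
      have h2 := hslope.div_const 2
      refine h2.congr' ?_
      filter_upwards [self_mem_nhdsWithin] with h hh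
      have hne : h ≠ 0 := ne_of_gt hh
      rw [slope_def_field, chemF1_zero v n hvpos x, sub_zero, sub_zero, div_div, mul_comm]
  have hfin : S / 2 = (1 / 2) * deriv (deriv n) x - deriv (fun y => n y * deriv v y / v y) x := by
    rw [hW, hSdef]; ring
  rw [← hfin]
  exact key.congr' (Eventually.of_forall fun h => by simp [chemF])
end
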